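/- arXiv:1807.03088 — 3 statements merged into one kernel-verified Lean document; each statement's English description precedes it below -/
import Mathlib

section
/- Let a be an element of p·D_k^{(p)} = {p·x mod p² : x ∈ D_k^{(p)}} ⊆ Z_{p²}. Then for every i, the set a·D_i^{(p²)} (mod p²) = {a·x mod p² : x ∈ D_i^{(p²)}} equals p·D_{(i+k) mod f}^{(p)} = {p·y mod p² : y ∈ D_{(i+k) mod f}^{(p)}}. -/
/-! Write `a = p·(g^(f t₀ + k) mod p)` and `i + k = f q + m` with `m < f`. Since `p·x mod p²` only
depends on `x mod p`, multiplying by `a` sends `g^(p f t + i)` to `p·(g^(f (t₀ + q + p t) + m) mod p)`.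
By Fermat, `g^(e f) ≡ 1 (mod p)`, so this depends on `t₀ + q + p t` only modulo `e`, and
`t ↦ t₀ + q + p t` permutes `ℤ/e` because `e ∣ p - 1` is prime to `p`. -/

open Finset Polynomial

/-- Generalized cyclotomic class `D_i^{(p)} = {g^(f·t+i) mod p : 0 ≤ t < e}`. -/
def Dp (p e f g i : ℕ) : Finset ℕ :=
  (Finset.range e).image fun t => g ^ (f * t + i) % p

/-- Generalized cyclotomic class `D_i^{(p²)} = {g^(p·f·t+i) mod p² : 0 ≤ t < e}`. -/
def Dp2 (p e f g i : ℕ) : Finset ℕ :=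
  (Finset.range e).image fun t => g ^ (p * f * t + i) % p ^ 2

/-- `p·D_i^{(p)} = {p·x mod p² : x ∈ D_i^{(p)}} ⊆ Z_{p²}`. -/
def pDp (p e f g i : ℕ) : Finset ℕ :=
  (Dp p e f g i).image fun x => p * x % p ^ 2

/-- `H_b^{(p)} = ⋃_{i=0}^{f/2-1} p·D_{(i+b) mod f}^{(p)}`. -/
def Hp (p e f g b : ℕ) : Finset ℕ :=
  (Finset.range (f / 2)).biUnion fun i => pDp p e f g ((i + b) % f)

/-- `H_b^{(p²)} = ⋃_{i=0}^{pf/2-1} D_{(i+b) mod pf}^{(p²)}`. -/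
def Hp2 (p e f g b : ℕ) : Finset ℕ :=
  (Finset.range (p * f / 2)).biUnion fun i => Dp2 p e f g ((i + b) % (p * f))

/-- The characteristic set `C₁ = H_b^{(p)} ∪ H_b^{(p²)} ∪ {0}`. -/
def C1 (p e f g b : ℕ) : Finset ℕ :=
  Hp p e f g b ∪ Hp2 p e f g b ∪ {0}

lemma Nat.Coprime.of_orderOf_natCast_ne_zero {g n : ℕ} (h : orderOf (g : ZMod n) ≠ 0) :
    g.Coprime n :=
  (ZMod.isUnit_iff_coprime g n).mp (orderOf_pos_iff.mp (Nat.pos_of_ne_zero h)).isUnit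

lemma Nat.mul_mod_sq_mul_mod_sq (p u v : ℕ) :
    p * u % p ^ 2 * (v % p ^ 2) % p ^ 2 = p * (u * v % p) % p ^ 2 := by
  have h : p * (u * v % p) ≡ p * (u * v) [MOD p ^ 2] := by
    rw [sq]; exact (Nat.mod_modEq _ _).mul_left' p
  rw [h, ← Nat.mul_mod, Nat.mul_assoc]

lemma Finset.image_range_add_mul_mod {e : ℕ} (c n : ℕ) (he : 0 < e) (hcop : e.Coprime n) :
    (range e).image (fun t => (c + n * t) % e) = range e := by
  refine eq_of_subset_of_card_le (fun y hy => ?_) ?_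
  · obtain ⟨t, -, rfl⟩ := mem_image.mp hy
    exact mem_range.mpr (Nat.mod_lt _ he)
  · rw [card_image_of_injOn, card_range]
    intro t₁ h₁ t₂ h₂ h
    have h' : n * t₁ ≡ n * t₂ [MOD e] := Nat.ModEq.add_left_cancel' c h
    have h'' : t₁ % e = t₂ % e := Nat.ModEq.cancel_left_of_coprime hcop h'
    rwa [Nat.mod_eq_of_lt (mem_range.mp h₁), Nat.mod_eq_of_lt (mem_range.mp h₂)] at h''

lemma Function.Periodic.image_range_add_mul {α : Type*} [DecidableEq α] {F : ℕ → α} {e : ℕ}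
    (hF : Function.Periodic F e) (c n : ℕ) (he : 0 < e) (hcop : e.Coprime n) :
    (range e).image (fun t => F (c + n * t)) = (range e).image F := by
  simp_rw [← hF.map_mod_nat (c + _)]
  conv_rhs => rw [← image_range_add_mul_mod c n he hcop]
  rw [image_image]
  rfl

lemma pDp_eq_image (p e f g i : ℕ) :
    pDp p e f g i = (range e).image fun t => p * (g ^ (f * t + i) % p) % p ^ 2 := by
  rw [pDp, Dp, image_image]; rfl

lemma periodic_pDp_summand {p e f g : ℕ} (hp : p.Prime) (hg : g.Coprime p)
    (hef : p - 1 = e * f) (m : ℕ) :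
    Function.Periodic (fun t => p * (g ^ (f * t + m) % p) % p ^ 2) e := by
  intro t
  have hfermat : g ^ (e * f) ≡ 1 [MOD p] := by
    rw [← hef, ← Nat.totient_prime hp]; exact Nat.ModEq.pow_totient hg
  have h : g ^ (f * (t + e) + m) ≡ g ^ (f * t + m) [MOD p] := by
    calc g ^ (f * (t + e) + m) = g ^ (f * t + m) * g ^ (e * f) := by ring
      _ ≡ g ^ (f * t + m) * 1 [MOD p] := hfermat.mul_left _
      _ = g ^ (f * t + m) := mul_one _
  exact congrArg (fun x => p * x % p ^ 2) h

theorem stmt_4_general (p e f g : ℕ) (hp : p.Prime)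
    (hef : p - 1 = e * f)
    (hg : orderOf (g : ZMod (p ^ 2)) = p * (p - 1))
    (k a : ℕ) (ha : a ∈ pDp p e f g k) :
    ∀ i : ℕ, (Dp2 p e f g i).image (fun x => a * x % p ^ 2) = pDp p e f g ((i + k) % f) := by
  intro i
  have hp1 : 0 < p - 1 := Nat.sub_pos_of_lt hp.one_lt
  have hgp : g.Coprime p := Nat.Coprime.coprime_dvd_right (dvd_pow_self p two_ne_zero)
    (.of_orderOf_natCast_ne_zero (by rw [hg]; exact (Nat.mul_pos hp.pos hp1).ne'))
  have he_dvd : e ∣ p - 1 := Dvd.intro f hef.symm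
  have hep : e.Coprime p := Nat.Coprime.coprime_dvd_left he_dvd
    ((Nat.coprime_self_sub_left hp.one_le).mpr (Nat.coprime_one_left p))
  have he : 0 < e := Nat.pos_of_dvd_of_pos he_dvd hp1
  rw [pDp_eq_image, mem_image] at ha
  obtain ⟨t₀, -, rfl⟩ := ha
  have hexp (t : ℕ) :
      f * t₀ + k + (p * f * t + i) = f * (t₀ + (i + k) / f + p * t) + (i + k) % f := by
    calc _ = f * t₀ + p * f * t + (f * ((i + k) / f) + (i + k) % f) := by
          rw [Nat.div_add_mod]; ring
      _ = _ := by ring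
  rw [Dp2, image_image, pDp_eq_image,
    ← (periodic_pDp_summand hp hgp hef _).image_range_add_mul (t₀ + (i + k) / f) p he hep]
  refine image_congr fun t _ => ?_
  rw [Function.comp_apply, Nat.mul_mod_sq_mul_mod_sq, Nat.mod_mul_mod, ← pow_add, hexp]

theorem stmt_4 (p e f r g : ℕ) (hp : p.Prime) (hodd : Odd p)
    (hr : 1 ≤ r) (hf : f = 2 ^ r) (hef : p - 1 = e * f)
    (hg : orderOf (g : ZMod (p ^ 2)) = p * (p - 1))
    (k a : ℕ) (ha : a ∈ pDp p e f g k) :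
    ∀ i : ℕ, (Dp2 p e f g i).image (fun x => a * x % p ^ 2) = pDp p e f g ((i + k) % f) :=
  stmt_4_general p e f g hp hef hg k a ha
end

section
/- If a ∈ p·D_k^{(p)} = {p·x mod p² : x ∈ D_k^{(p)}}, then H_b^{(p²)}(β^a) = Σ_{t ∈ H_b^{(p²)}} β^{a·t} equals ε + H_{(b+k) mod f}^{(p)}(β), where ε ∈ F₂ ⊆ K is the image of (p−1)/2 in F₂ (ε = 1 if p ≡ 3 (mod 4), ε = 0 if p ≡ 1 (mod 4)). -/
open Finset Polynomial

/-!
Write `γ = β ^ p`, a primitive `p`-th root of unity, and `η j = ∑_{x ∈ D_j^{(p)}} γ ^ x`.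
For `a = p·g^(fs+k)` and `t = g^(pfu+i)` we have `β ^ (a t) = γ ^ (g^(f(u+s)+i+k) mod p)`, because
`g^(p-1) ≡ 1 (mod p)`; hence `D_i^{(p²)}(β^a) = η (i+k)`, and likewise `p·D_j^{(p)}(β) = η j`.
The periods `η j` depend only on `j mod f`, and a full cycle `η 0 + ⋯ + η (f-1)` is the sum of all
nontrivial `p`-th roots of unity, `-1 = 1`. As `pf/2 = f·(p-1)/2 + f/2`, the `pf/2` classes
forming `H_b^{(p²)}` contribute `(p-1)/2` full cycles plus the `f/2` periods forming
`H_{b+k}^{(p)}(β)`.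
-/

open Function

section PowMod

variable {n g : ℕ}

lemma pow_mod_eq_pow_mod_iff (hg : IsOfFinOrder (g : ZMod n)) {E E' : ℕ} :
    g ^ E % n = g ^ E' % n ↔ E ≡ E' [MOD orderOf (g : ZMod n)] := by
  rw [← hg.pow_eq_pow_iff_modEq, ← ZMod.natCast_eq_natCast_iff', Nat.cast_pow, Nat.cast_pow]

lemma periodic_pow_mod : Periodic (fun E => g ^ E % n) (orderOf (g : ZMod n)) := fun E => by
  show g ^ (E + _) % n = g ^ E % n
  rw [← ZMod.natCast_eq_natCast_iff', Nat.cast_pow, Nat.cast_pow, pow_add, pow_orderOf_eq_one,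
    mul_one]

lemma injOn_pow_mod_range_orderOf (hg : IsOfFinOrder (g : ZMod n)) :
    Set.InjOn (fun E => g ^ E % n) (range (orderOf (g : ZMod n))) := by
  intro E hE E' hE' h
  simp only [coe_range, Set.mem_Iio] at hE hE'
  exact ((pow_mod_eq_pow_mod_iff hg).mp h).eq_of_lt_of_lt hE hE'

variable {d e : ℕ}

lemma injOn_pow_mod_mul_add (hd : 0 < d) (hg : orderOf (g : ZMod n) = d * e) (i : ℕ) :
    Set.InjOn (fun t => g ^ (d * t + i) % n) (range e) := by
  intro t ht t' ht' h
  simp only [coe_range, Set.mem_Iio] at ht ht'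
  have hfin : IsOfFinOrder (g : ZMod n) := orderOf_pos_iff.mp (hg ▸ Nat.mul_pos hd (by omega))
  rw [pow_mod_eq_pow_mod_iff hfin, hg] at h
  exact (Nat.ModEq.mul_left_cancel' hd.ne' (h.add_right_cancel' i)).eq_of_lt_of_lt ht ht'

lemma disjoint_image_pow_mod_mul_add (hd : 0 < d) (hg : orderOf (g : ZMod n) = d * e)
    {i i' : ℕ} (h : i % d ≠ i' % d) :
    Disjoint ((range e).image fun t => g ^ (d * t + i) % n)
      ((range e).image fun t => g ^ (d * t + i') % n) := by
  refine disjoint_left.mpr ?_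
  simp only [mem_image, mem_range]
  rintro _ ⟨t, ht, rfl⟩ ⟨t', -, heq⟩
  have hfin : IsOfFinOrder (g : ZMod n) := orderOf_pos_iff.mp (hg ▸ Nat.mul_pos hd (by omega))
  rw [pow_mod_eq_pow_mod_iff hfin, hg] at heq
  have := Nat.ModEq.of_mul_right e heq
  simp only [Nat.ModEq, Nat.mul_add_mod] at this
  exact h this.symm

lemma pairwiseDisjoint_image_pow_mod_mul_add (hd : 0 < d) (hg : orderOf (g : ZMod n) = d * e)
    (b : ℕ) {m : ℕ} (hm : m ≤ d) :
    ((range m : Finset ℕ) : Set ℕ).PairwiseDisjoint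
      fun i => (range e).image fun t => g ^ (d * t + (i + b) % d) % n := by
  intro i hi i' hi' hne
  simp only [coe_range, Set.mem_Iio] at hi hi'
  refine disjoint_image_pow_mod_mul_add hd hg ?_
  rw [Nat.mod_mod, Nat.mod_mod]
  exact fun h => hne ((Nat.ModEq.add_right_cancel' b h).eq_of_lt_of_lt (by omega) (by omega))

lemma image_pow_mod_range_eq_Ico {p : ℕ} (hp : p.Prime) (hg : orderOf (g : ZMod p) = p - 1) :
    (range (p - 1)).image (fun E => g ^ E % p) = Ico 1 p := by
  have : Fact p.Prime := ⟨hp⟩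
  have hfin : IsOfFinOrder (g : ZMod p) := orderOf_pos_iff.mp (by have := hp.two_le; omega)
  refine eq_of_subset_of_card_le (fun x hx => ?_) ?_
  · obtain ⟨E, -, rfl⟩ := mem_image.mp hx
    have hne : g ^ E % p ≠ 0 := fun h0 => by
      have := ZMod.natCast_mod (g ^ E) p
      rw [h0, Nat.cast_zero, Nat.cast_pow] at this
      exact (hfin.isUnit.pow E).ne_zero this.symm
    exact mem_Ico.mpr ⟨Nat.pos_of_ne_zero hne, Nat.mod_lt _ hp.pos⟩
  · rw [card_image_of_injOn (hg ▸ injOn_pow_mod_range_orderOf hfin), card_range, Nat.card_Ico]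

lemma orderOf_natCast_of_orderOf_natCast_sq {p : ℕ} (hp : p.Prime)
    (hg : orderOf (g : ZMod (p ^ 2)) = p * (p - 1)) : orderOf (g : ZMod p) = p - 1 := by
  have : Fact p.Prime := ⟨hp⟩
  have hunit : IsUnit (g : ZMod p) := by
    have hfin : IsOfFinOrder (g : ZMod (p ^ 2)) :=
      orderOf_pos_iff.mp (hg ▸ Nat.mul_pos hp.pos (by have := hp.two_le; omega))
    simpa using hfin.isUnit.map (ZMod.castHom (dvd_pow_self p two_ne_zero) (ZMod p))
  set m := orderOf (g : ZMod p)
  -- Lifting the exponent: `g ^ m ≡ 1 [mod p]` gives `g ^ (m * p) ≡ 1 [mod p ^ 2]`.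
  have hlift : (g : ZMod (p ^ 2)) ^ (m * p) = 1 := by
    have h1 : (p : ℤ) ∣ (g : ℤ) ^ m - 1 := by
      rw [← ZMod.intCast_zmod_eq_zero_iff_dvd]
      push_cast
      rw [pow_orderOf_eq_one, sub_self]
    have h2 : ((p ^ 2 : ℕ) : ℤ) ∣ (g : ℤ) ^ (m * p) - 1 := by
      simpa [pow_mul] using dvd_sub_pow_of_dvd_sub h1 1
    rw [← ZMod.intCast_zmod_eq_zero_iff_dvd] at h2
    push_cast at h2
    exact sub_eq_zero.mp h2
  have hdvd : p * (p - 1) ∣ p * m := hg ▸ orderOf_dvd_of_pow_eq_one (by rwa [mul_comm])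
  exact Nat.dvd_antisymm (ZMod.orderOf_dvd_card_sub_one hunit.ne_zero)
    (Nat.dvd_of_mul_dvd_mul_left hp.pos hdvd)

end PowMod

section PeriodicSums

variable {M : Type*}

lemma sum_range_mul_eq_sum_sum [AddCommMonoid M] (F : ℕ → M) (d e : ℕ) :
    ∑ E ∈ range (d * e), F E = ∑ i ∈ range d, ∑ t ∈ range e, F (d * t + i) := by
  rw [sum_comm]
  induction e with
  | zero => simp
  | succ e ih => rw [Nat.mul_succ, sum_range_add, ih, sum_range_succ]

variable [AddCancelCommMonoid M]

lemma sum_range_add_one_of_eq {G : ℕ → M} {n : ℕ} (h : G n = G 0) :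
    ∑ i ∈ range n, G (i + 1) = ∑ i ∈ range n, G i := by
  apply add_right_cancel (b := G 0)
  rw [← sum_range_succ', sum_range_succ, h]

lemma periodic_sum_range_mul_add {F : ℕ → M} {d e : ℕ} (hF : Periodic F (d * e)) :
    Periodic (fun j => ∑ t ∈ range e, F (d * t + j)) d := fun j => by
  have h : ∀ t, d * t + (j + d) = d * (t + 1) + j := fun t => by ring
  simp only [h]
  exact sum_range_add_one_of_eq (G := fun t => F (d * t + j)) (by simpa [add_comm] using hF j)

lemma Function.Periodic.sum_range_add {V : ℕ → M} {d : ℕ} (hV : Periodic V d) (c : ℕ) :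
    ∑ i ∈ range d, V (i + c) = ∑ i ∈ range d, V i := by
  induction c with
  | zero => rfl
  | succ c ih =>
    rw [← ih, ← sum_range_add_one_of_eq (G := fun i => V (i + c)) (by simpa [add_comm] using hV c)]
    simp only [add_right_comm _ 1 c, add_assoc]

lemma Function.Periodic.sum_range_mul_add {V : ℕ → M} {d : ℕ} (hV : Periodic V d) (c n m : ℕ) :
    ∑ i ∈ range (d * n + m), V (i + c) = n • ∑ i ∈ range d, V i + ∑ i ∈ range m, V (i + c) := by
  have hshift : ∀ k i, V (d * k + i + c) = V (i + c) := fun k i => by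
    rw [show d * k + i + c = i + c + k * d by ring]
    exact hV.nat_mul k (i + c)
  rw [Finset.sum_range_add]
  simp only [hshift]
  congr 1
  induction n with
  | zero => simp
  | succ n ih =>
    rw [Nat.mul_succ, Finset.sum_range_add, ih, succ_nsmul]
    simp only [hshift, hV.sum_range_add]

end PeriodicSums

lemma IsPrimitiveRoot.sum_Ico_one_pow_eq_neg_one {R : Type*} [CommRing R] [IsDomain R] {γ : R}
    {p : ℕ} (hγ : IsPrimitiveRoot γ p) (hp : 1 < p) : ∑ x ∈ Ico 1 p, γ ^ x = -1 := by
  have h := hγ.geom_sum_eq_zero hp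
  rw [range_eq_Ico, sum_eq_sum_Ico_succ_bot (by omega), pow_zero] at h
  linear_combination h

lemma sum_image_mul_mod_sq {M : Type*} [AddCommMonoid M] {p : ℕ} (hp : 0 < p) {S : Finset ℕ}
    (hS : ∀ x ∈ S, x < p) (φ : ℕ → M) :
    ∑ y ∈ S.image (fun x => p * x % p ^ 2), φ y = ∑ x ∈ S, φ (p * x) := by
  have hmod : ∀ x ∈ S, p * x % p ^ 2 = p * x := fun x hx =>
    Nat.mod_eq_of_lt (by rw [sq]; exact Nat.mul_lt_mul_of_pos_left (hS x hx) hp)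
  rw [sum_image fun x hx y hy h => by
    rw [hmod x hx, hmod y hy] at h; exact Nat.eq_of_mul_eq_mul_left hp h]
  exact sum_congr rfl fun x hx => by rw [hmod x hx]

lemma pow_mul_mod_sq_mul_mod_sq {R : Type*} [Monoid R] {β : R} {p : ℕ} (hβ : orderOf β = p ^ 2)
    (x y : ℕ) : β ^ (p * (x % p) % p ^ 2 * (y % p ^ 2)) = (β ^ p) ^ (x * y % p) := by
  have hβp : (β ^ p) ^ p = 1 := by rw [← pow_mul, ← sq, ← hβ, pow_orderOf_eq_one]
  calc β ^ (p * (x % p) % p ^ 2 * (y % p ^ 2))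
      = β ^ (p * (x % p * y)) := pow_eq_pow_of_modEq (by
          simpa only [mul_assoc] using
            (Nat.mod_modEq (p * (x % p)) (p ^ 2)).mul (Nat.mod_modEq y _))
        (hβ ▸ pow_orderOf_eq_one β)
    _ = (β ^ p) ^ (x % p * y) := pow_mul β p _
    _ = (β ^ p) ^ (x * y % p) :=
        pow_eq_pow_of_modEq (((Nat.mod_modEq x p).mul_right y).trans (Nat.mod_modEq _ p).symm) hβp

/-- `cyclotomicPeriod p e f g γ j = ∑_{x ∈ D_j^{(p)}} γ ^ x`. -/
def cyclotomicPeriod {R : Type*} [Semiring R] (p e f g : ℕ) (γ : R) (j : ℕ) : R :=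
  ∑ t ∈ range e, γ ^ (g ^ (f * t + j) % p)

section CyclotomicPeriod

variable {R : Type*} {p e f g : ℕ}

lemma periodic_cyclotomicPeriod [Ring R] (hg : orderOf (g : ZMod p) = f * e) (γ : R) :
    Periodic (cyclotomicPeriod p e f g γ) f :=
  periodic_sum_range_mul_add (F := fun E => γ ^ (g ^ E % p)) (hg ▸ periodic_pow_mod.comp (γ ^ ·))

lemma sum_Hp_pow_eq [Ring R] (hp : 0 < p) (hf : 0 < f) (hg : orderOf (g : ZMod p) = f * e)
    (β : R) (b : ℕ) :
    ∑ t ∈ Hp p e f g b, β ^ t = ∑ i ∈ range (f / 2), cyclotomicPeriod p e f g (β ^ p) (i + b) := by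
  have hHp : Hp p e f g b =
      ((range (f / 2)).biUnion fun i => Dp p e f g ((i + b) % f)).image (p * · % p ^ 2) := by
    rw [biUnion_image]; rfl
  have hlt : ∀ x ∈ (range (f / 2)).biUnion fun i => Dp p e f g ((i + b) % f), x < p := by
    simp only [Dp, mem_biUnion, mem_image]
    rintro _ ⟨_, -, _, -, rfl⟩
    exact Nat.mod_lt _ hp
  have hdisj : ((range (f / 2) : Finset ℕ) : Set ℕ).PairwiseDisjoint
      fun i => Dp p e f g ((i + b) % f) :=
    pairwiseDisjoint_image_pow_mod_mul_add hf hg b (Nat.div_le_self f 2)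
  rw [hHp, sum_image_mul_mod_sq hp hlt, sum_biUnion hdisj]
  refine sum_congr rfl fun i _ => ?_
  rw [Dp, sum_image (injOn_pow_mod_mul_add hf hg _),
    ← (periodic_cyclotomicPeriod hg _).map_mod_nat, cyclotomicPeriod]
  simp only [pow_mul]

lemma sum_Hp2_pow_mul_eq [Ring R] (hp : p.Prime) (hef : p - 1 = e * f)
    (hg : orderOf (g : ZMod (p ^ 2)) = p * (p - 1)) {β : R} (hβ : orderOf β = p ^ 2)
    {a k : ℕ} (ha : a ∈ pDp p e f g k) (b : ℕ) :
    ∑ t ∈ Hp2 p e f g b, β ^ (a * t) =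
      ∑ i ∈ range (p * f / 2), cyclotomicPeriod p e f g (β ^ p) (i + (b + k)) := by
  obtain ⟨_, hx, rfl⟩ := mem_image.mp ha
  obtain ⟨s, -, rfl⟩ := mem_image.mp hx
  have hp1 := hp.one_lt
  have hf : 0 < f := Nat.pos_of_mul_pos_left (hef ▸ Nat.sub_pos_of_lt hp1)
  have hpf : 0 < p * f := Nat.mul_pos hp.pos hf
  have hgp : orderOf (g : ZMod p) = f * e := by
    rw [orderOf_natCast_of_orderOf_natCast_sq hp hg, hef, mul_comm]
  have hg2 : orderOf (g : ZMod (p ^ 2)) = p * f * e := by rw [hg, hef]; ring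
  have hV := periodic_cyclotomicPeriod hgp (β ^ p)
  have hdisj : ((range (p * f / 2) : Finset ℕ) : Set ℕ).PairwiseDisjoint
      fun i => Dp2 p e f g ((i + b) % (p * f)) :=
    pairwiseDisjoint_image_pow_mod_mul_add hpf hg2 b (Nat.div_le_self _ 2)
  rw [Hp2, sum_biUnion hdisj]
  refine sum_congr rfl fun i _ => ?_
  rw [Dp2, sum_image (injOn_pow_mod_mul_add hpf hg2 _)]
  set j := (i + b) % (p * f)
  have hterm : ∀ t, β ^ (p * (g ^ (f * s + k) % p) % p ^ 2 * (g ^ (p * f * t + j) % p ^ 2)) =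
      (β ^ p) ^ (g ^ (f * t + (j + k + f * s)) % p) := fun t => by
    rw [pow_mul_mod_sq_mul_mod_sq hβ, ← pow_add]
    have hexp : f * s + k + (p * f * t + j) = f * t + (j + k + f * s) + f * t * (f * e) := by
      rw [show p = e * f + 1 by omega]; ring
    rw [hexp, ← hgp]
    exact congrArg _ (periodic_pow_mod.nat_mul (f * t) _)
  simp only [hterm]
  rw [← cyclotomicPeriod, ← hV.map_mod_nat, ← hV.map_mod_nat (i + (b + k)),
    Nat.add_mul_mod_self_left, Nat.add_mod, Nat.mod_mod_of_dvd _ (dvd_mul_left f p), ← Nat.add_mod,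
    add_assoc]

lemma sum_range_cyclotomicPeriod [CommRing R] [IsDomain R] (hp : p.Prime) (hef : p - 1 = e * f)
    (hg : orderOf (g : ZMod p) = p - 1) {γ : R} (hγ : IsPrimitiveRoot γ p) :
    ∑ i ∈ range f, cyclotomicPeriod p e f g γ i = -1 := by
  have hfin : IsOfFinOrder (g : ZMod p) := orderOf_pos_iff.mp (by have := hp.two_le; omega)
  calc ∑ i ∈ range f, cyclotomicPeriod p e f g γ i
      = ∑ E ∈ range (p - 1), γ ^ (g ^ E % p) := by
        rw [hef, mul_comm, sum_range_mul_eq_sum_sum]; rfl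
    _ = ∑ x ∈ (range (p - 1)).image (fun E => g ^ E % p), γ ^ x :=
        (sum_image (hg ▸ injOn_pow_mod_range_orderOf hfin)).symm
    _ = -1 := by rw [image_pow_mod_range_eq_Ico hp hg, hγ.sum_Ico_one_pow_eq_neg_one hp.one_lt]

end CyclotomicPeriod

theorem stmt_8_general (p e f g : ℕ) (hp : p.Prime) (hodd : Odd p)
    (hef : p - 1 = e * f)
    (hg : orderOf (g : ZMod (p ^ 2)) = p * (p - 1))
    {K : Type*} [Field K] (hK : CharP K 2) (β : K) (hβ : orderOf β = p ^ 2)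
    (b k a : ℕ) (ha : a ∈ pDp p e f g k) :
    ∑ t ∈ Hp2 p e f g b, β ^ (a * t) =
      (((p - 1) / 2 : ℕ) : K) + ∑ t ∈ Hp p e f g ((b + k) % f), β ^ t := by
  have hf : 0 < f := Nat.pos_of_mul_pos_left (hef ▸ Nat.sub_pos_of_lt hp.one_lt)
  have hgp : orderOf (g : ZMod p) = p - 1 := orderOf_natCast_of_orderOf_natCast_sq hp hg
  have hgp' : orderOf (g : ZMod p) = f * e := by rw [hgp, hef, mul_comm]
  have hγ : IsPrimitiveRoot (β ^ p) p := by
    convert IsPrimitiveRoot.orderOf (β ^ p)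
    rw [orderOf_pow_of_dvd hp.ne_zero (hβ ▸ dvd_pow_self p two_ne_zero), hβ, sq,
      Nat.mul_div_cancel _ hp.pos]
  have hV := periodic_cyclotomicPeriod hgp' (β ^ p)
  have hfull : ∑ i ∈ range f, cyclotomicPeriod p e f g (β ^ p) i = 1 := by
    rw [sum_range_cyclotomicPeriod hp hef hgp hγ, CharTwo.neg_eq]
  have hsplit : p * f / 2 = f * ((p - 1) / 2) + f / 2 := by
    obtain ⟨c, rfl⟩ := hodd
    rw [show (2 * c + 1) * f = 2 * (f * c) + f by ring, Nat.mul_add_div two_pos]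
    congr 2; omega
  rw [sum_Hp2_pow_mul_eq hp hef hg hβ ha, sum_Hp_pow_eq hp.pos hf hgp', hsplit,
    hV.sum_range_mul_add, hfull, nsmul_one]
  refine congrArg _ (sum_congr rfl fun i _ => ?_)
  rw [← hV.map_mod_nat (i + (b + k) % f), Nat.add_mod_mod, hV.map_mod_nat]

theorem stmt_8 (p e f r g : ℕ) (hp : p.Prime) (hodd : Odd p)
    (hr : 1 ≤ r) (hf : f = 2 ^ r) (hef : p - 1 = e * f)
    (hg : orderOf (g : ZMod (p ^ 2)) = p * (p - 1))
    {K : Type*} [Field K] (hK : CharP K 2) (β : K) (hβ : orderOf β = p ^ 2)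
    (b k a : ℕ) (ha : a ∈ pDp p e f g k) :
    ∑ t ∈ Hp2 p e f g b, β ^ (a * t) =
      (((p - 1) / 2 : ℕ) : K) + ∑ t ∈ Hp p e f g ((b + k) % f), β ^ t :=
  stmt_8_general p e f g hp hodd hef hg hK β hβ b k a ha
end

section
/- Suppose 2^e ≢ 1 (mod p²) and 2 ∉ D_0^{(p)} (equivalently 2^e ≢ 1 (mod p)). Then the linear complexity of the sequence s equals p²; equivalently, gcd(x^{p²} − 1, S(x)) = 1 in F₂[x]. -/
open Finset Polynomial

/-- The polynomial `S(x) = Σ_{i=0}^{p²-1} s_i x^i` over `F₂`, where `s_i = 1` iff `i mod p² ∈ C₁`. -/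
noncomputable def Spoly (p e f g b : ℕ) : Polynomial (ZMod 2) :=
  ∑ i ∈ Finset.range (p ^ 2),
    if i % p ^ 2 ∈ C1 p e f g b then (Polynomial.X : Polynomial (ZMod 2)) ^ i else 0

/-!
Multiplication by `g ^ m` permutes `Z_{p²}` and shifts the index of every cyclotomic class by `m`,
so it maps `C₁` for `b` onto `C₁` for `b + m`. Write `2 ≡ g ^ k (mod p²)`; the hypothesis
`2 ∉ D₀^{(p)}` says `f ∤ k`, hence some multiple `t k` is `≡ pf/2 (mod pf)`. For a `p²`-th root
of unity `z` in characteristic two, the Frobenius gives `S_b(z)² = S_{b+k}(z)`, so `S_b(z) = 0`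
would force `S_{b+pf/2}(z) = 0`. But `C₁` for `b` and for `b + pf/2` cover `Z_{p²}` and meet only
in `0`, so `S_b(z) + S_{b+pf/2}(z) = 1` when `z ≠ 1`, while `S_b(1) = |C₁| = (p² + 1)/2` is odd.
Hence `S` has no root in common with `x^{p²} - 1`.
-/

theorem Nat.pow_modEq_pow_of_modEq {M N g a b : ℕ} (hg : g ^ N ≡ 1 [MOD M])
    (h : a ≡ b [MOD N]) : g ^ a ≡ g ^ b [MOD M] := by
  rw [← ZMod.natCast_eq_natCast_iff] at hg ⊢
  push_cast at hg ⊢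
  rw [pow_eq_pow_mod a hg, pow_eq_pow_mod b hg, h]

theorem mem_image_pow_iff {M d e g j x : ℕ} (hde : 0 < d * e) (hg : g ^ (d * e) ≡ 1 [MOD M]) :
    x ∈ (range e).image (fun t => g ^ (d * t + j) % M) ↔ ∃ n, n ≡ j [MOD d] ∧ g ^ n % M = x := by
  constructor
  · intro h
    obtain ⟨t, -, rfl⟩ := mem_image.mp h
    exact ⟨d * t + j, by simp [Nat.ModEq], rfl⟩
  · rintro ⟨n, hn, rfl⟩
    -- first move `n` above `j` by a multiple of the period `d * e`, to subtract `j` in `ℕ`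
    have hshift : n + d * e * j ≡ n [MOD d * e] := by simp [Nat.ModEq]
    have hj : j ≤ n + d * e * j := le_add_left (Nat.le_mul_of_pos_left j hde)
    have hdvd : j ≡ n + d * e * j [MOD d] :=
      hn.symm.trans ((hshift.of_mul_right e).symm)
    obtain ⟨q, hq⟩ := (Nat.modEq_iff_dvd' hj).mp hdvd
    refine mem_image.mpr ⟨q % e, mem_range.mpr (Nat.mod_lt q (Nat.pos_of_mul_pos_left hde)), ?_⟩
    have : d * (q % e) + j ≡ n [MOD d * e] :=
      calc d * (q % e) + j ≡ d * q + j [MOD d * e] :=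
            ((Nat.mod_modEq q e).mul_left' d).add_right j
        _ = n + d * e * j := by omega
        _ ≡ n [MOD d * e] := hshift
    exact Nat.pow_modEq_pow_of_modEq hg this

theorem dvd_mul_mod_sq (p a : ℕ) : p ∣ p * a % p ^ 2 :=
  (Nat.dvd_mod_iff (dvd_pow_self p two_ne_zero)).mpr (dvd_mul_right p a)

theorem gcd_dvd_mul_two_pow_pred {q r k : ℕ} (hk : ¬ 2 ^ r ∣ k) :
    k.gcd (q * 2 ^ r) ∣ q * 2 ^ (r - 1) := by
  obtain ⟨d₁, d₂, hd₁, hd₂, hd⟩ := Nat.dvd_mul.mp (Nat.gcd_dvd_right k (q * 2 ^ r))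
  obtain ⟨i, hi, rfl⟩ := (Nat.dvd_prime_pow Nat.prime_two).mp hd₂
  have hir : i ≠ r := by
    rintro rfl
    exact hk ((Dvd.intro_left d₁ hd).trans (Nat.gcd_dvd_left k _))
  rw [← hd]
  exact mul_dvd_mul hd₁ (pow_dvd_pow 2 (by omega))

theorem exists_mul_modEq_half {q r k : ℕ} (hq : 0 < q) (hr : 1 ≤ r) (hk : ¬ 2 ^ r ∣ k) :
    ∃ t, t * k ≡ q * 2 ^ r / 2 [MOD q * 2 ^ r] := by
  have hhalf : q * 2 ^ r / 2 = q * 2 ^ (r - 1) := by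
    rw [← Nat.sub_add_cancel hr, pow_succ, ← mul_assoc, Nat.mul_div_cancel _ two_pos,
      Nat.add_sub_cancel]
  obtain ⟨c, hc⟩ := gcd_dvd_mul_two_pow_pred (q := q) hk
  have hlt : k.gcd (q * 2 ^ r) < q * 2 ^ r := by
    refine (Nat.le_of_dvd (by positivity) (gcd_dvd_mul_two_pow_pred hk)).trans_lt ?_
    rw [← hhalf]
    exact Nat.div_lt_self (by positivity) one_lt_two
  obtain ⟨m, -, hm⟩ := Nat.exists_mul_mod_eq_gcd hlt
  refine ⟨m * c, ?_⟩
  rw [hhalf, hc, show m * c * k = k * m * c by ring]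
  have hm' : k * m ≡ k.gcd (q * 2 ^ r) [MOD q * 2 ^ r] := hm.trans (Nat.mod_eq_of_lt hlt).symm
  exact hm'.mul_right c

-- `H_b` is the union of the classes whose index lies in the window `b, b + 1, …, b + N/2 - 1`
-- modulo `N`; this predicate says that the exponent `n` lies in that window.
def InHalfWindow (N b n : ℕ) : Prop := ∃ i < N / 2, n ≡ i + b [MOD N]

namespace InHalfWindow

variable {N b b' n n' : ℕ}

theorem add (h : InHalfWindow N b n) (m : ℕ) : InHalfWindow N (b + m) (n + m) := by
  obtain ⟨i, hi, hn⟩ := h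
  exact ⟨i, hi, by rw [← add_assoc]; exact hn.add_right m⟩

theorem congr (h : InHalfWindow N b n) (hb : b ≡ b' [MOD N]) (hn : n ≡ n' [MOD N]) :
    InHalfWindow N b' n' := by
  obtain ⟨i, hi, hin⟩ := h
  exact ⟨i, hi, hn.symm.trans (hin.trans (hb.add_left i))⟩

theorem not_and_add_half : ¬ (InHalfWindow N b n ∧ InHalfWindow N (b + N / 2) n) := by
  rintro ⟨⟨i, hi, h⟩, ⟨i', hi', h'⟩⟩
  have : i ≡ i' + N / 2 [MOD N] :=
    Nat.ModEq.add_right_cancel' b (h.symm.trans (by rw [add_assoc, add_comm (N / 2)]; exact h'))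
  rw [Nat.ModEq, Nat.mod_eq_of_lt (by omega), Nat.mod_eq_of_lt (by omega)] at this
  omega

theorem or_add_half (hN : Even N) (hN0 : N ≠ 0) (b n : ℕ) :
    InHalfWindow N b n ∨ InHalfWindow N (b + N / 2) n := by
  have : NeZero N := ⟨hN0⟩
  set i := ((n : ZMod N) - b).val
  have hi : i < N := ZMod.val_lt _
  have hn : n ≡ i + b [MOD N] := by
    rw [← ZMod.natCast_eq_natCast_iff]
    simp [i]
  obtain ⟨k, rfl⟩ := hN
  by_cases hik : i < (k + k) / 2
  · exact Or.inl ⟨i, hik, hn⟩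
  · have : i - k + (b + (k + k) / 2) = i + b := by omega
    exact Or.inr ⟨i - k, by omega, by rwa [this]⟩

end InHalfWindow

theorem mem_biUnion_halfWindow_iff {N b x : ℕ} {cls : ℕ → Finset ℕ} {φ : ℕ → ℕ}
    (hcls : ∀ j x, x ∈ cls j ↔ ∃ n, n ≡ j [MOD N] ∧ φ n = x) :
    x ∈ (range (N / 2)).biUnion (fun i => cls ((i + b) % N)) ↔
      ∃ n, InHalfWindow N b n ∧ φ n = x := by
  simp only [mem_biUnion, mem_range, hcls]
  constructor
  · rintro ⟨i, hi, n, hn, rfl⟩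
    exact ⟨n, ⟨i, hi, hn.trans (Nat.mod_modEq _ _)⟩, rfl⟩
  · rintro ⟨n, ⟨i, hi, hn⟩, rfl⟩
    exact ⟨i, hi, n, hn.trans (Nat.mod_modEq _ _).symm, rfl⟩

namespace PrimitiveRootModSq

variable {p g : ℕ} (hp : p.Prime) (hg : orderOf (g : ZMod (p ^ 2)) = p * (p - 1))
include hp hg

theorem isOfFinOrder : IsOfFinOrder (g : ZMod (p ^ 2)) := by
  rw [← orderOf_pos_iff, hg]
  exact Nat.mul_pos hp.pos (Nat.sub_pos_of_lt hp.one_lt)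

theorem coprime : g.Coprime p :=
  ((ZMod.isUnit_iff_coprime g (p ^ 2)).mp (isOfFinOrder hp hg).isUnit).coprime_dvd_right
    (dvd_pow_self p two_ne_zero)

theorem pow_modEq_pow_sq_iff {a b : ℕ} :
    g ^ a ≡ g ^ b [MOD p ^ 2] ↔ a ≡ b [MOD p * (p - 1)] := by
  rw [← ZMod.natCast_eq_natCast_iff, ← hg]
  push_cast
  exact (isOfFinOrder hp hg).pow_eq_pow_iff_modEq

theorem orderOf_natCast : orderOf (g : ZMod p) = p - 1 := by
  have := Fact.mk hp
  set m := orderOf (g : ZMod p)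
  have hg0 : (g : ZMod p) ≠ 0 := by
    rw [Ne, ZMod.natCast_eq_zero_iff]
    exact (Nat.Prime.coprime_iff_not_dvd hp).mp (coprime hp hg).symm
  refine Nat.dvd_antisymm (ZMod.orderOf_dvd_card_sub_one hg0) ?_
  -- `g ^ m ≡ 1 [MOD p]` lifts to `g ^ (m * p) ≡ 1 [MOD p ^ 2]`
  have h1 : g ^ m ≡ 1 [MOD p] := by
    rw [← ZMod.natCast_eq_natCast_iff]
    push_cast
    exact pow_orderOf_eq_one _
  have h2 : g ^ (m * p) ≡ 1 [MOD p ^ 2] := by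
    rw [Nat.modEq_iff_dvd] at h1 ⊢
    have := dvd_sub_pow_of_dvd_sub h1 1
    push_cast at this ⊢
    simpa [pow_mul] using this
  rw [← pow_zero g, pow_modEq_pow_sq_iff hp hg, Nat.modEq_zero_iff_dvd, mul_comm m] at h2
  exact Nat.dvd_of_mul_dvd_mul_left hp.pos h2

theorem pow_modEq_pow_iff {a b : ℕ} :
    g ^ a ≡ g ^ b [MOD p] ↔ a ≡ b [MOD p - 1] := by
  have hfin : IsOfFinOrder (g : ZMod p) := by
    rw [← orderOf_pos_iff, orderOf_natCast hp hg]
    exact Nat.sub_pos_of_lt hp.one_lt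
  rw [← ZMod.natCast_eq_natCast_iff, ← orderOf_natCast hp hg]
  push_cast
  exact hfin.pow_eq_pow_iff_modEq

theorem exists_pow_modEq {x : ℕ} (hx : x.Coprime p) :
    ∃ n, g ^ n ≡ x [MOD p ^ 2] := by
  have := Fact.mk hp
  set u := ZMod.unitOfCoprime g ((coprime hp hg).pow_right 2)
  have htop : Subgroup.zpowers u = ⊤ := by
    refine Subgroup.eq_top_of_card_eq _ ?_
    rw [Nat.card_zpowers, ← orderOf_units, Nat.card_eq_fintype_card, ZMod.card_units_eq_totient,
      Nat.totient_prime_pow hp two_pos]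
    simpa [u] using hg
  obtain ⟨n, hn⟩ := mem_powers_iff_mem_zpowers.mpr
    (htop ▸ Subgroup.mem_top (ZMod.unitOfCoprime x (hx.pow_right 2)))
  refine ⟨n, ?_⟩
  rw [← ZMod.natCast_eq_natCast_iff]
  simpa [u] using congrArg Units.val hn

end PrimitiveRootModSq

section CyclotomicClasses

variable {p e f g : ℕ} (hp : p.Prime) (hg : orderOf (g : ZMod (p ^ 2)) = p * (p - 1))
  (hef : p - 1 = e * f)
include hp hg hef

theorem mem_Dp_iff {j x : ℕ} : x ∈ Dp p e f g j ↔ ∃ n, n ≡ j [MOD f] ∧ g ^ n % p = x := by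
  refine mem_image_pow_iff (by rw [mul_comm, ← hef]; exact Nat.sub_pos_of_lt hp.one_lt) ?_
  rw [← pow_zero g, PrimitiveRootModSq.pow_modEq_pow_iff hp hg, hef, mul_comm]
  exact Nat.modEq_zero_iff_dvd.mpr dvd_rfl

theorem mem_Dp2_iff {j x : ℕ} :
    x ∈ Dp2 p e f g j ↔ ∃ n, n ≡ j [MOD p * f] ∧ g ^ n % p ^ 2 = x := by
  refine mem_image_pow_iff ?_ ?_
  · rw [mul_assoc, mul_comm f, ← hef]
    exact Nat.mul_pos hp.pos (Nat.sub_pos_of_lt hp.one_lt)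
  · rw [← pow_zero g, PrimitiveRootModSq.pow_modEq_pow_sq_iff hp hg, hef, mul_assoc, mul_comm e]
    exact Nat.modEq_zero_iff_dvd.mpr dvd_rfl

theorem mem_Hp_iff {b x : ℕ} :
    x ∈ Hp p e f g b ↔ ∃ n, InHalfWindow f b n ∧ p * g ^ n % p ^ 2 = x := by
  refine mem_biUnion_halfWindow_iff fun j x => ?_
  have hmod : ∀ n, p * (g ^ n % p) % p ^ 2 = p * g ^ n % p ^ 2 := fun n => by
    rw [sq, Nat.mul_mod_mul_left, Nat.mul_mod_mul_left, Nat.mod_mod]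
  simp only [pDp, mem_image, mem_Dp_iff hp hg hef]
  constructor
  · rintro ⟨_, ⟨n, hn, rfl⟩, rfl⟩
    exact ⟨n, hn, (hmod n).symm⟩
  · rintro ⟨n, hn, rfl⟩
    exact ⟨_, ⟨n, hn, rfl⟩, hmod n⟩

theorem mem_Hp2_iff {b x : ℕ} :
    x ∈ Hp2 p e f g b ↔ ∃ n, InHalfWindow (p * f) b n ∧ g ^ n % p ^ 2 = x :=
  mem_biUnion_halfWindow_iff fun _ _ => mem_Dp2_iff hp hg hef

theorem mem_C1_iff {b x : ℕ} :
    x ∈ C1 p e f g b ↔ (∃ n, InHalfWindow f b n ∧ p * g ^ n % p ^ 2 = x) ∨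
      (∃ n, InHalfWindow (p * f) b n ∧ g ^ n % p ^ 2 = x) ∨ x = 0 := by
  rw [C1, mem_union, mem_union, mem_singleton, mem_Hp_iff hp hg hef, mem_Hp2_iff hp hg hef,
    or_assoc]

theorem C1_subset_range {b : ℕ} : C1 p e f g b ⊆ range (p ^ 2) := by
  intro x hx
  have hp2 : 0 < p ^ 2 := pow_pos hp.pos 2
  rw [mem_range]
  rcases (mem_C1_iff hp hg hef).mp hx with ⟨n, -, rfl⟩ | ⟨n, -, rfl⟩ | rfl
  · exact Nat.mod_lt _ hp2
  · exact Nat.mod_lt _ hp2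
  · exact hp2

omit hp hg hef in
theorem C1_congr {b b' : ℕ} (hb : b ≡ b' [MOD p * f]) : C1 p e f g b = C1 p e f g b' := by
  have hf : ∀ i, (i + b) % f = (i + b') % f := fun i => (hb.of_mul_left p).add_left i
  have hpf : ∀ i, (i + b) % (p * f) = (i + b') % (p * f) := fun i => hb.add_left i
  simp only [C1, Hp, Hp2, hf, hpf]

theorem mul_pow_mod_mem_C1 {b x : ℕ} (hx : x ∈ C1 p e f g b) (m : ℕ) :
    g ^ m * x % p ^ 2 ∈ C1 p e f g (b + m) := by
  rw [mem_C1_iff hp hg hef]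
  rcases (mem_C1_iff hp hg hef).mp hx with ⟨n, hn, rfl⟩ | ⟨n, hn, rfl⟩ | rfl
  · refine Or.inl ⟨n + m, hn.add m, ?_⟩
    rw [Nat.mul_mod_mod, pow_add]
    ring_nf
  · exact Or.inr (Or.inl ⟨n + m, hn.add m, by rw [Nat.mul_mod_mod, pow_add, mul_comm]⟩)
  · simp

omit hef in
theorem injOn_mul_pow_mod (m : ℕ) : Set.InjOn (fun x => g ^ m * x % p ^ 2) (range (p ^ 2)) := by
  intro x hx y hy hxy
  have hcop : (p ^ 2).gcd (g ^ m) = 1 :=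
    (((PrimitiveRootModSq.coprime hp hg).pow m 2).symm : Nat.Coprime _ _)
  have := Nat.ModEq.cancel_left_of_coprime hcop hxy
  rwa [Nat.ModEq, Nat.mod_eq_of_lt (mem_range.mp hx), Nat.mod_eq_of_lt (mem_range.mp hy)] at this

theorem image_mul_pow_mod_C1 (b m : ℕ) :
    (C1 p e f g b).image (fun x => g ^ m * x % p ^ 2) = C1 p e f g (b + m) := by
  refine Subset.antisymm (image_subset_iff.mpr fun x hx => mul_pow_mod_mem_C1 hp hg hef hx m) ?_
  intro y hy
  -- `g ^ (p * (p - 1) * m) ≡ 1 [MOD p ^ 2]`, so multiplying by `g ^ (k * m)` undoes the shift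
  obtain ⟨k, hk⟩ : ∃ k, p * (p - 1) = k + 1 :=
    ⟨_, (Nat.succ_pred_eq_of_pos (Nat.mul_pos hp.pos (Nat.sub_pos_of_lt hp.one_lt))).symm⟩
  have hcycle : b + m + k * m ≡ b [MOD p * f] := by
    have : m + k * m = p * f * (e * m) := by
      rw [show m + k * m = (k + 1) * m by ring, ← hk, hef]; ring
    rw [add_assoc, this, Nat.ModEq, Nat.add_mul_mod_self_left]
  have hx := mul_pow_mod_mem_C1 hp hg hef hy (k * m)
  rw [C1_congr hcycle] at hx
  refine mem_image.mpr ⟨_, hx, ?_⟩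
  have hone : g ^ (m + k * m) ≡ 1 [MOD p ^ 2] := by
    rw [← pow_zero g, PrimitiveRootModSq.pow_modEq_pow_sq_iff hp hg,
      show m + k * m = (k + 1) * m by ring, ← hk]
    exact Nat.modEq_zero_iff_dvd.mpr (dvd_mul_right _ _)
  rw [Nat.mul_mod_mod, ← mul_assoc, ← pow_add, Nat.mul_mod, hone, ← Nat.mul_mod, one_mul,
    Nat.mod_eq_of_lt (mem_range.mp (C1_subset_range hp hg hef hy))]

omit hef in
theorem not_dvd_pow_mod_sq (n : ℕ) : ¬ p ∣ g ^ n % p ^ 2 := by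
  rw [Nat.dvd_mod_iff (dvd_pow_self p two_ne_zero)]
  exact (Nat.Prime.coprime_iff_not_dvd hp).mp ((PrimitiveRootModSq.coprime hp hg).symm.pow_right n)

theorem modEq_of_mul_pow_mod_sq_eq {n n' : ℕ} (h : p * g ^ n % p ^ 2 = p * g ^ n' % p ^ 2) :
    n ≡ n' [MOD f] := by
  rw [sq, Nat.mul_mod_mul_left, Nat.mul_mod_mul_left] at h
  have := (PrimitiveRootModSq.pow_modEq_pow_iff hp hg).mp (Nat.eq_of_mul_eq_mul_left hp.pos h)
  rw [hef] at this
  exact this.of_mul_left e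

theorem modEq_of_pow_mod_sq_eq {n n' : ℕ} (h : g ^ n % p ^ 2 = g ^ n' % p ^ 2) :
    n ≡ n' [MOD p * f] := by
  have := (PrimitiveRootModSq.pow_modEq_pow_sq_iff hp hg).mp h
  rw [hef, mul_left_comm] at this
  exact this.of_mul_left e

section Halves

variable (hodd : Odd p) (hf : Even f)
include hodd hf

omit hp hg hef in
theorem mul_div_two_modEq : p * f / 2 ≡ f / 2 [MOD f] := by
  obtain ⟨j, rfl⟩ := hodd
  obtain ⟨k, rfl⟩ := hf
  have h1 : (2 * j + 1) * (k + k) / 2 = k + (k + k) * j := by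
    rw [show (2 * j + 1) * (k + k) = 2 * (k + (k + k) * j) by ring,
      Nat.mul_div_cancel_left _ two_pos]
  rw [h1, show (k + k) / 2 = k by omega, Nat.ModEq, Nat.add_mul_mod_self_left]

theorem C1_union_C1_add_half (b : ℕ) :
    C1 p e f g b ∪ C1 p e f g (b + p * f / 2) = range (p ^ 2) := by
  refine Subset.antisymm (union_subset (C1_subset_range hp hg hef) (C1_subset_range hp hg hef)) ?_
  intro x hx
  have hf0 : f ≠ 0 := by rintro rfl; have := hp.one_lt; omega
  simp only [mem_union, mem_C1_iff hp hg hef]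
  by_cases hx0 : x = 0
  · simp [hx0]
  by_cases hpx : p ∣ x
  · obtain ⟨y, rfl⟩ := hpx
    have hy : y < p := by rw [mem_range, sq] at hx; exact Nat.lt_of_mul_lt_mul_left hx
    obtain ⟨n, hn⟩ := PrimitiveRootModSq.exists_pow_modEq hp hg
      (Nat.coprime_of_lt_prime (by rintro rfl; simp at hx0) hy hp).symm
    have hxn : p * g ^ n % p ^ 2 = p * y := by
      have hnp : g ^ n % p = y % p := hn.of_dvd (dvd_pow_self p two_ne_zero)
      rw [sq, Nat.mul_mod_mul_left, hnp, Nat.mod_eq_of_lt hy]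
    rcases InHalfWindow.or_add_half hf hf0 b n with h | h
    · exact Or.inl (Or.inl ⟨n, h, hxn⟩)
    · exact Or.inr (Or.inl ⟨n, h.congr ((mul_div_two_modEq hodd hf).add_left b).symm rfl, hxn⟩)
  · obtain ⟨n, hn⟩ := PrimitiveRootModSq.exists_pow_modEq hp hg
      ((Nat.Prime.coprime_iff_not_dvd hp).mpr hpx).symm
    have hxn : g ^ n % p ^ 2 = x := by rw [hn, Nat.mod_eq_of_lt (mem_range.mp hx)]
    rcases InHalfWindow.or_add_half (hf.mul_left p) (mul_ne_zero hp.ne_zero hf0) b n with h | h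
    · exact Or.inl (Or.inr (Or.inl ⟨n, h, hxn⟩))
    · exact Or.inr (Or.inr (Or.inl ⟨n, h, hxn⟩))

theorem C1_inter_C1_add_half (b : ℕ) : C1 p e f g b ∩ C1 p e f g (b + p * f / 2) = {0} := by
  refine eq_singleton_iff_unique_mem.mpr ⟨by simp [C1], fun x hx => ?_⟩
  rw [mem_inter, mem_C1_iff hp hg hef, mem_C1_iff hp hg hef] at hx
  have hhalf : b + p * f / 2 ≡ b + f / 2 [MOD f] := (mul_div_two_modEq hodd hf).add_left b
  obtain ⟨hx₁, hx₂⟩ := hx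
  rcases hx₁ with ⟨n, hn, rfl⟩ | ⟨n, hn, rfl⟩ | rfl
  · rcases hx₂ with ⟨n', hn', hx'⟩ | ⟨n', hn', hx'⟩ | hx'
    · exact (InHalfWindow.not_and_add_half
        ⟨hn, hn'.congr hhalf (modEq_of_mul_pow_mod_sq_eq hp hg hef hx')⟩).elim
    · exact (not_dvd_pow_mod_sq hp hg n' (hx' ▸ dvd_mul_mod_sq p _)).elim
    · exact hx'
  · rcases hx₂ with ⟨n', hn', hx'⟩ | ⟨n', hn', hx'⟩ | hx'
    · exact (not_dvd_pow_mod_sq hp hg n (hx' ▸ dvd_mul_mod_sq p _)).elim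
    · exact (InHalfWindow.not_and_add_half
        ⟨hn, hn'.congr rfl (modEq_of_pow_mod_sq_eq hp hg hef hx')⟩).elim
    · exact hx'
  · rfl

theorem two_mul_card_C1 (b : ℕ) : 2 * #(C1 p e f g b) = p ^ 2 + 1 := by
  have hcard : #(C1 p e f g (b + p * f / 2)) = #(C1 p e f g b) := by
    rw [← image_mul_pow_mod_C1 hp hg hef b (p * f / 2),
      card_image_of_injOn ((injOn_mul_pow_mod hp hg _).mono (C1_subset_range hp hg hef))]
  have := card_union_add_card_inter (C1 p e f g b) (C1 p e f g (b + p * f / 2))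
  rw [C1_union_C1_add_half hp hg hef hodd hf, C1_inter_C1_add_half hp hg hef hodd hf, hcard,
    card_range, card_singleton] at this
  omega

end Halves

end CyclotomicClasses

section CharacterSums

variable {K : Type*} [Field K] {p e f g : ℕ} (hp : p.Prime)
  (hg : orderOf (g : ZMod (p ^ 2)) = p * (p - 1)) (hef : p - 1 = e * f)
include hp hg hef

theorem sum_C1_sq [CharP K 2] {k : ℕ} (hk : g ^ k ≡ 2 [MOD p ^ 2]) {z : K} (hz : z ^ p ^ 2 = 1)
    (b : ℕ) : (∑ x ∈ C1 p e f g b, z ^ x) ^ 2 = ∑ x ∈ C1 p e f g (b + k), z ^ x := by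
  rw [CharTwo.sum_sq, ← image_mul_pow_mod_C1 hp hg hef b k,
    sum_image ((injOn_mul_pow_mod hp hg k).mono (C1_subset_range hp hg hef))]
  refine sum_congr rfl fun x _ => ?_
  have hx : 2 * x ≡ g ^ k * x [MOD p ^ 2] := (hk.mul_right x).symm
  rw [← pow_mul, mul_comm, pow_eq_pow_mod _ hz, hx, ← pow_eq_pow_mod _ hz]

theorem sum_C1_add_sum_C1_add_half (hodd : Odd p) (hf : Even f) {z : K} (hz : z ^ p ^ 2 = 1)
    (hz1 : z ≠ 1) (b : ℕ) :
    ∑ x ∈ C1 p e f g b, z ^ x + ∑ x ∈ C1 p e f g (b + p * f / 2), z ^ x = 1 := by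
  rw [← sum_union_inter, C1_union_C1_add_half hp hg hef hodd hf,
    C1_inter_C1_add_half hp hg hef hodd hf, geom_sum_eq hz1, hz]
  simp

theorem sum_C1_one [CharP K 2] (hodd : Odd p) (hf : Even f) (b : ℕ) :
    ∑ x ∈ C1 p e f g b, (1 : K) ^ x = 1 := by
  have hcard := two_mul_card_C1 hp hg hef hodd hf b
  obtain ⟨j, hj⟩ := hodd
  have hodd_card : #(C1 p e f g b) % 2 = 1 := by
    have : 2 * #(C1 p e f g b) = 2 * (2 * (j * j + j) + 1) := by rw [hcard, hj]; ring
    omega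
  simp only [one_pow, sum_const, nsmul_eq_mul, mul_one]
  rw [CharP.cast_eq_mod K 2, hodd_card, Nat.cast_one]

theorem sum_C1_ne_zero [CharP K 2] (hodd : Odd p) (hf : Even f) {k t : ℕ}
    (hk : g ^ k ≡ 2 [MOD p ^ 2]) (ht : t * k ≡ p * f / 2 [MOD p * f]) {z : K}
    (hz : z ^ p ^ 2 = 1) (b : ℕ) : ∑ x ∈ C1 p e f g b, z ^ x ≠ 0 := by
  intro h0
  by_cases hz1 : z = 1
  · subst hz1
    exact one_ne_zero ((sum_C1_one hp hg hef hodd hf b).symm.trans h0)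
  have hiter : ∀ s, ∑ x ∈ C1 p e f g (b + s * k), z ^ x = 0 := by
    intro s
    induction s with
    | zero => simpa using h0
    | succ s ih =>
      rw [Nat.succ_mul, ← add_assoc, ← sum_C1_sq hp hg hef hk hz, ih, zero_pow two_ne_zero]
  have hhalf := sum_C1_add_sum_C1_add_half hp hg hef hodd hf hz hz1 b
  rw [h0, ← C1_congr (ht.add_left b), hiter, add_zero] at hhalf
  exact zero_ne_one hhalf

end CharacterSums

theorem aeval_Spoly {K : Type*} [CommRing K] [Algebra (ZMod 2) K] {p e f g b : ℕ}
    (hC1 : C1 p e f g b ⊆ range (p ^ 2)) (z : K) :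
    aeval z (Spoly p e f g b) = ∑ x ∈ C1 p e f g b, z ^ x := by
  rw [← inter_eq_right.mpr hC1, ← sum_ite_mem, Spoly, map_sum]
  refine sum_congr rfl fun i hi => ?_
  rw [Nat.mod_eq_of_lt (mem_range.mp hi)]
  split_ifs <;> simp

theorem Polynomial.eq_one_of_isUnit_zmod_two {P : (ZMod 2)[X]} (hP : IsUnit P) : P = 1 := by
  obtain ⟨r, hr, rfl⟩ := Polynomial.isUnit_iff.mp hP
  rw [isUnit_iff_eq_one.mp hr, C_1]

theorem stmt_17_general (p e f r g b : ℕ) (hp : p.Prime) (hodd : Odd p)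
    (hr : 1 ≤ r) (hf : f = 2 ^ r) (hef : p - 1 = e * f)
    (hg : orderOf (g : ZMod (p ^ 2)) = p * (p - 1))
    (h2 : 2 ∉ Dp p e f g 0) :
    EuclideanDomain.gcd ((Polynomial.X : Polynomial (ZMod 2)) ^ p ^ 2 - 1)
      (Spoly p e f g b) = 1 := by
  have hfeven : Even f := hf ▸ (Nat.even_pow' (by omega)).mpr even_two
  obtain ⟨k, hk⟩ := PrimitiveRootModSq.exists_pow_modEq hp hg (Nat.coprime_two_left.mpr hodd)
  have hfk : ¬ 2 ^ r ∣ k := by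
    intro hdvd
    refine h2 ((mem_Dp_iff hp hg hef).mpr ⟨k, Nat.modEq_zero_iff_dvd.mpr (hf ▸ hdvd), ?_⟩)
    rw [hk.of_dvd (dvd_pow_self p two_ne_zero), Nat.mod_eq_of_lt]
    have := Nat.odd_iff.mp hodd
    have := hp.two_le
    omega
  obtain ⟨t, ht⟩ := exists_mul_modEq_half hp.pos hr hfk
  rw [← hf] at ht
  refine eq_one_of_isUnit_zmod_two (EuclideanDomain.gcd_isUnit_iff.mpr
    ((isCoprime_iff_aeval_ne_zero_of_isAlgClosed (k := ZMod 2) (AlgebraicClosure (ZMod 2)) _ _).mpr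
      fun z => ?_))
  rw [aeval_Spoly (C1_subset_range hp hg hef)]
  by_cases hz : z ^ p ^ 2 = 1
  · exact Or.inr (sum_C1_ne_zero hp hg hef hodd hfeven hk ht hz b)
  · left
    simpa [sub_eq_zero] using hz

theorem stmt_17 (p e f r g b : ℕ) (hp : p.Prime) (hodd : Odd p)
    (hr : 1 ≤ r) (hf : f = 2 ^ r) (hef : p - 1 = e * f)
    (hg : orderOf (g : ZMod (p ^ 2)) = p * (p - 1))
    (hb : b < p * f)
    (h1 : ¬ (2 ^ e ≡ 1 [MOD p ^ 2])) (h2 : 2 ∉ Dp p e f g 0) :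
    EuclideanDomain.gcd ((Polynomial.X : Polynomial (ZMod 2)) ^ p ^ 2 - 1)
      (Spoly p e f g b) = 1 :=
  stmt_17_general p e f r g b hp hodd hr hf hef hg h2
end
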